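/- For each β ≠ 0 and each (θ₁,θ₂) ∈ (0,1)², the number R_β(θ₁,θ₂) = −(1/β) ln(1 − (1−e^{−βθ₁})(1−e^{−βθ₂})/(1−e^{−β})) lies in the open interval (max{0,θ₁+θ₂−1}, min{θ₁,θ₂}), and t = R_β(θ₁,θ₂) is the unique critical point of t ↦ Φ_β(θ₁,θ₂;t) on the interior of I_{θ₁,θ₂}, i.e. the unique solution there of ∂Φ_β(θ₁,θ₂;t)/∂t = 0. -/

import Mathlib

open MeasureTheory Real Set Filter ENNReal
open scoped Classical

noncomputable section

/-- Lebesgue measure on `[0,1]` (as a measure on `ℝ`). -/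
def lamI : Measure ℝ := volume.restrict (Set.Icc (0:ℝ) 1)

/-- Lebesgue measure on `[0,1]²` (as a measure on `ℝ × ℝ`). -/
def lam2 : Measure (ℝ × ℝ) := lamI.prod lamI

/-- The pair interaction `h((x₁,y₁),(x₂,y₂))`. -/
def hfun (p q : ℝ × ℝ) : ℝ := if (p.1 - q.1) * (p.2 - q.2) < 0 then 1 else 0

/-- The limiting pressure `p(β)`, interpreted as `0` at `β = 0`. -/
def pP (β : ℝ) : ℝ :=
  if β = 0 then 0 else ∫ x in (0:ℝ)..1, Real.log ((1 - Real.exp (-β * x)) / (β * x))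

/-- The relative entropy `S(ν | λ⊗²) ∈ ℝ ∪ {−∞}` for measures on `[0,1]²`. -/
def Srel2 (ν : Measure (ℝ × ℝ)) : EReal :=
  if ν ≪ lam2 then (((- ∫ p, Real.log ((ν.rnDeriv lam2 p).toReal) ∂ν) : ℝ) : EReal) else ⊥

/-- The relative entropy `S(μ | λ) ∈ ℝ ∪ {−∞}` for measures on `[0,1]`. -/
def Srel1 (μ : Measure ℝ) : EReal :=
  if μ ≪ lamI then (((- ∫ x, Real.log ((μ.rnDeriv lamI x).toReal) ∂μ) : ℝ) : EReal) else ⊥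

/-- The mean-field energy `ℰ(ν)`. -/
def energy (ν : Measure (ℝ × ℝ)) : ℝ := (1 / 2) * ∫ p, ∫ q, hfun p q ∂ν ∂ν

/-- The large deviation rate function `I_β(ν) = −(S(ν|λ⊗²) − β ℰ(ν) − p(β))`. -/
def rate (β : ℝ) (ν : Measure (ℝ × ℝ)) : EReal :=
  -(Srel2 ν - ((β * energy ν : ℝ) : EReal) - ((pP β : ℝ) : EReal))

/-- The explicit four-square value `Φ̃_β(θ₁,θ₂;t₁₁,t₁₂,t₂₁,t₂₂)`. -/
def Phit (β θ₁ θ₂ t₁₁ t₁₂ t₂₁ t₂₂ : ℝ) : ℝ :=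
  pP β + t₁₁ * Real.log (t₁₁ / (θ₁ * θ₂)) + t₁₂ * Real.log (t₁₂ / (θ₁ * (1 - θ₂)))
    + t₂₁ * Real.log (t₂₁ / ((1 - θ₁) * θ₂)) + t₂₂ * Real.log (t₂₂ / ((1 - θ₁) * (1 - θ₂)))
    + t₁₁ * pP (β * t₁₁) + t₁₂ * pP (β * t₁₂) + t₂₁ * pP (β * t₂₁) + t₂₂ * pP (β * t₂₂)
    - (t₁₁ + t₁₂) * pP (β * (t₁₁ + t₁₂)) - (t₁₁ + t₂₁) * pP (β * (t₁₁ + t₂₁))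
    - (t₁₂ + t₂₂) * pP (β * (t₁₂ + t₂₂)) - (t₂₁ + t₂₂) * pP (β * (t₂₁ + t₂₂))
    + β * t₁₂ * t₂₁

/-- The one-parameter reduction `Φ_β(θ₁,θ₂;t)`. -/
def Phi (β θ₁ θ₂ t : ℝ) : ℝ := Phit β θ₁ θ₂ t (θ₁ - t) (θ₂ - t) (1 - θ₁ - θ₂ + t)


/-- The optimal four-square value `R_β(θ₁,θ₂)`. -/
def Rfun (β θ₁ θ₂ : ℝ) : ℝ :=
  -(1 / β) * Real.log (1 - (1 - Real.exp (-β * θ₁)) * (1 - Real.exp (-β * θ₂)) / (1 - Real.exp (-β)))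

/-!
Each cell contributes `s log (s / |Λ|) + s p(βs)`, and since
`s p(βs) = ∫₀ˢ log ((1 - e^{-βu}) / (βu)) du` its derivative is
`log (s / |Λ|) + 1 + log ((1 - e^{-βs}) / (βs))`. In `Φ'` the cell sizes and the `|Λ_{ij}|` cancel:
with `x = e^{βt}`, `a = e^{βθ₁}`, `b = e^{βθ₂}`, `c = e^{β(θ₁+θ₂-1)}` one gets
`exp Φ'(t) = (x - 1)(x - c) / ((a - x)(b - x))`. Hence `Φ'(t) = 0` is the linear equation
`x (a + b - 1 - c) = ab - c`, whose solution is `x = e^{βR_β}`. At the endpoints `x ∈ {1, c}` and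
`x ∈ {a, b}` the affine function `ab - c - (a + b - 1 - c) x` equals `(a - x)(b - x)`, resp.
`-(x - 1)(x - c)`, products of two differences `e^{βu} - e^{βv}` with `v < u`; their signs place
`R_β` strictly inside the interval.
-/

def pDensity (u : ℝ) : ℝ := log ((1 - exp (-u)) / u)

lemma one_sub_exp_neg_div_pos {u : ℝ} (hu : u ≠ 0) : 0 < (1 - exp (-u)) / u := by
  rcases hu.lt_or_gt with hu | hu
  · exact div_pos_of_neg_of_neg (by linarith [Real.one_lt_exp_iff.2 (neg_pos.2 hu)]) hu
  · exact div_pos (by linarith [Real.exp_lt_one_iff.2 (neg_neg_of_pos hu)]) hu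

lemma continuous_pDensity : Continuous pDensity := by
  -- `(1 - e^{-u}) / u` is the difference quotient of `-e^{-u}` at `0`; at `u = 0` both
  -- `pDensity 0 = log 0` and `log 1` vanish.
  let f : ℝ → ℝ := fun u => -exp (-u)
  have hf : ∀ u, HasDerivAt f (exp (-u)) u := fun u => by
    have := ((hasDerivAt_neg u).exp).neg
    rwa [mul_neg, mul_one, neg_neg] at this
  have hslope : ∀ u ≠ 0, dslope f 0 u = (1 - exp (-u)) / u := fun u hu => by
    rw [dslope_of_ne _ hu, slope_def_field]
    simp only [f, neg_zero, exp_zero, sub_zero]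
    ring
  have hzero : dslope f 0 0 = 1 := by rw [dslope_same, (hf 0).deriv, neg_zero, exp_zero]
  have hdens : pDensity = fun u => log (dslope f 0 u) := by
    funext u
    rcases eq_or_ne u 0 with rfl | hu
    · rw [hzero]
      simp [pDensity]
    · rw [pDensity, hslope u hu]
  rw [hdens]
  refine Continuous.log (continuous_iff_continuousAt.2 fun u => ?_) fun u => ?_
  · rcases eq_or_ne u 0 with rfl | hu
    · exact continuousAt_dslope_same.2 (hf 0).differentiableAt
    · exact (continuousAt_dslope_of_ne hu).2 (hf u).continuousAt
  · rcases eq_or_ne u 0 with rfl | hu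
    · rw [hzero]
      exact one_ne_zero
    · exact hslope u hu ▸ (one_sub_exp_neg_div_pos hu).ne'

lemma pP_eq_integral (β : ℝ) : pP β = ∫ x in (0:ℝ)..1, pDensity (β * x) := by
  by_cases hβ : β = 0
  · simp [pP, hβ, pDensity]
  · simp only [pP, if_neg hβ, pDensity, neg_mul]

lemma mul_pP_mul_eq_integral (β s : ℝ) :
    s * pP (β * s) = ∫ u in (0:ℝ)..s, pDensity (β * u) := by
  rw [pP_eq_integral]
  simpa [mul_assoc] using
    intervalIntegral.smul_integral_comp_mul_left (a := 0) (b := 1) (fun u => pDensity (β * u)) s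

lemma hasDerivAt_mul_pP_mul (β s : ℝ) :
    HasDerivAt (fun s => s * pP (β * s)) (pDensity (β * s)) s := by
  simp only [mul_pP_mul_eq_integral]
  exact ((continuous_pDensity.comp (continuous_const_mul β)).integral_hasStrictDerivAt 0 s
    ).hasDerivAt

lemma hasDerivAt_mul_log_div {s c : ℝ} (hs : s ≠ 0) (hc : c ≠ 0) :
    HasDerivAt (fun s => s * log (s / c)) (log (s / c) + 1) s := by
  have h := ((hasDerivAt_mul_log (div_ne_zero hs hc)).comp s
    ((hasDerivAt_id s).div_const c)).const_mul c
  refine (h.congr_deriv (by field_simp)).congr_of_eventuallyEq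
    (Filter.Eventually.of_forall fun x => ?_)
  simp only [Function.comp, id]
  field_simp

def cellTerm (β c s : ℝ) : ℝ := s * log (s / c) + s * pP (β * s)

def cellDeriv (β c s : ℝ) : ℝ := log (s / c) + 1 + pDensity (β * s)

lemma hasDerivAt_cellTerm (β : ℝ) {c s : ℝ} (hs : s ≠ 0) (hc : c ≠ 0) :
    HasDerivAt (cellTerm β c) (cellDeriv β c s) s :=
  (hasDerivAt_mul_log_div hs hc).add (hasDerivAt_mul_pP_mul β s)

lemma exp_cellDeriv {β c s : ℝ} (hβ : β ≠ 0) (hs : 0 < s) (hc : 0 < c) :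
    exp (cellDeriv β c s) = (1 - exp (-(β * s))) / (β * c) * exp 1 := by
  rw [cellDeriv, pDensity, exp_add, exp_add, exp_log (div_pos hs hc),
    exp_log (one_sub_exp_neg_div_pos (mul_ne_zero hβ hs.ne'))]
  field_simp

lemma Phi_eq_cellTerm (β θ₁ θ₂ s : ℝ) :
    Phi β θ₁ θ₂ s = cellTerm β (θ₁ * θ₂) s + cellTerm β (θ₁ * (1 - θ₂)) (θ₁ - s)
      + cellTerm β ((1 - θ₁) * θ₂) (θ₂ - s) + cellTerm β ((1 - θ₁) * (1 - θ₂)) (1 - θ₁ - θ₂ + s)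
      + β * (θ₁ - s) * (θ₂ - s)
      + (pP β - θ₁ * pP (β * θ₁) - θ₂ * pP (β * θ₂) - (1 - θ₂) * pP (β * (1 - θ₂))
        - (1 - θ₁) * pP (β * (1 - θ₁))) := by
  rw [Phi, Phit, show s + (θ₁ - s) = θ₁ by ring, show s + (θ₂ - s) = θ₂ by ring,
    show θ₁ - s + (1 - θ₁ - θ₂ + s) = 1 - θ₂ by ring,
    show θ₂ - s + (1 - θ₁ - θ₂ + s) = 1 - θ₁ by ring]
  simp only [cellTerm]
  ring

lemma cells_pos_of_mem_Ioo {θ₁ θ₂ t : ℝ} (ht : t ∈ Ioo (max 0 (θ₁ + θ₂ - 1)) (min θ₁ θ₂)) :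
    0 < t ∧ 0 < θ₁ - t ∧ 0 < θ₂ - t ∧ 0 < 1 - θ₁ - θ₂ + t := by
  simp only [mem_Ioo, max_lt_iff, lt_min_iff] at ht
  refine ⟨?_, ?_, ?_, ?_⟩ <;> linarith

lemma hasDerivAt_Phi {β θ₁ θ₂ t : ℝ} (h₁₁ : 0 < t) (h₁₂ : 0 < θ₁ - t) (h₂₁ : 0 < θ₂ - t)
    (h₂₂ : 0 < 1 - θ₁ - θ₂ + t) :
    HasDerivAt (fun s => Phi β θ₁ θ₂ s)
      (cellDeriv β (θ₁ * θ₂) t - cellDeriv β (θ₁ * (1 - θ₂)) (θ₁ - t)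
        - cellDeriv β ((1 - θ₁) * θ₂) (θ₂ - t) + cellDeriv β ((1 - θ₁) * (1 - θ₂)) (1 - θ₁ - θ₂ + t)
        + β * (2 * t - θ₁ - θ₂)) t := by
  have hΛ₁₁ : θ₁ * θ₂ ≠ 0 := by nlinarith
  have hΛ₁₂ : θ₁ * (1 - θ₂) ≠ 0 := by nlinarith
  have hΛ₂₁ : (1 - θ₁) * θ₂ ≠ 0 := by nlinarith
  have hΛ₂₂ : (1 - θ₁) * (1 - θ₂) ≠ 0 := by nlinarith
  have hl₁ := (hasDerivAt_id t).const_sub θ₁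
  have hl₂ := (hasDerivAt_id t).const_sub θ₂
  have hl₃ := (hasDerivAt_id t).const_add (1 - θ₁ - θ₂)
  simp only [Phi_eq_cellTerm]
  refine (((((hasDerivAt_cellTerm β h₁₁.ne' hΛ₁₁).add
    ((hasDerivAt_cellTerm β h₁₂.ne' hΛ₁₂).comp t hl₁)).add
    ((hasDerivAt_cellTerm β h₂₁.ne' hΛ₂₁).comp t hl₂)).add
    ((hasDerivAt_cellTerm β h₂₂.ne' hΛ₂₂).comp t hl₃)).add
    ((hl₁.const_mul β).mul hl₂)).add_const _ |>.congr_deriv ?_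
  simp only [id]
  ring

lemma mul_exp_mul_sub_exp_mul_pos_iff {β u v : ℝ} (hβ : β ≠ 0) :
    0 < β * (exp (β * u) - exp (β * v)) ↔ v < u := by
  rcases hβ.lt_or_gt with hβ | hβ
  · rw [← neg_mul_neg, mul_pos_iff_of_pos_left (neg_pos.2 hβ), neg_pos, sub_neg,
      exp_lt_exp, mul_lt_mul_left_of_neg hβ]
  · rw [mul_pos_iff_of_pos_left hβ, sub_pos, exp_lt_exp, mul_lt_mul_iff_right₀ hβ]

lemma exp_mul_sub_mul_exp_mul_sub_pos {β u₁ v₁ u₂ v₂ : ℝ} (hβ : β ≠ 0) (h₁ : v₁ < u₁)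
    (h₂ : v₂ < u₂) : 0 < (exp (β * u₁) - exp (β * v₁)) * (exp (β * u₂) - exp (β * v₂)) := by
  have h := mul_pos ((mul_exp_mul_sub_exp_mul_pos_iff hβ).2 h₁)
    ((mul_exp_mul_sub_exp_mul_pos_iff hβ).2 h₂)
  rw [mul_mul_mul_comm] at h
  exact pos_of_mul_pos_right h (mul_self_nonneg β)

lemma one_sub_exp_neg_mul_eq_div {β s u v : ℝ} (h : s = u - v) :
    1 - exp (-(β * s)) = (exp (β * u) - exp (β * v)) / exp (β * u) := by
  rw [eq_div_iff (exp_pos _).ne', sub_mul, one_mul, ← exp_add, h]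
  ring_nf

lemma exp_deriv_Phi {β θ₁ θ₂ t : ℝ} (hβ : β ≠ 0) (h₁₁ : 0 < t) (h₁₂ : 0 < θ₁ - t)
    (h₂₁ : 0 < θ₂ - t) (h₂₂ : 0 < 1 - θ₁ - θ₂ + t) :
    exp (deriv (fun s => Phi β θ₁ θ₂ s) t)
      = (exp (β * t) - 1) * (exp (β * t) - exp (β * (θ₁ + θ₂ - 1)))
        / ((exp (β * θ₁) - exp (β * t)) * (exp (β * θ₂) - exp (β * t))) := by
  have hθ₁ : 0 < θ₁ := by linarith
  have hθ₂ : 0 < θ₂ := by linarith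
  have hθ₁' : 0 < 1 - θ₁ := by linarith
  have hθ₂' : 0 < 1 - θ₂ := by linarith
  have ha : exp (β * θ₁) - exp (β * t) ≠ 0 := fun h => by
    simp [sub_eq_zero, hβ] at h
    linarith
  have hb : exp (β * θ₂) - exp (β * t) ≠ 0 := fun h => by
    simp [sub_eq_zero, hβ] at h
    linarith
  rw [(hasDerivAt_Phi h₁₁ h₁₂ h₂₁ h₂₂).deriv, exp_add, exp_add, exp_sub, exp_sub,
    exp_cellDeriv hβ h₁₁ (mul_pos hθ₁ hθ₂), exp_cellDeriv hβ h₁₂ (mul_pos hθ₁ hθ₂'),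
    exp_cellDeriv hβ h₂₁ (mul_pos hθ₁' hθ₂), exp_cellDeriv hβ h₂₂ (mul_pos hθ₁' hθ₂'),
    one_sub_exp_neg_mul_eq_div (u := t) (v := 0) (by ring),
    one_sub_exp_neg_mul_eq_div (u := θ₁) (v := t) rfl,
    one_sub_exp_neg_mul_eq_div (u := θ₂) (v := t) rfl,
    one_sub_exp_neg_mul_eq_div (u := t) (v := θ₁ + θ₂ - 1) (by ring),
    show β * (2 * t - θ₁ - θ₂) = β * t + β * t - β * θ₁ - β * θ₂ by ring,
    exp_sub, exp_sub, exp_add, mul_zero, exp_zero]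
  field_simp

def critNum (β θ₁ θ₂ : ℝ) : ℝ := exp (β * θ₁) * exp (β * θ₂) - exp (β * (θ₁ + θ₂ - 1))

def critDen (β θ₁ θ₂ : ℝ) : ℝ := exp (β * θ₁) + exp (β * θ₂) - 1 - exp (β * (θ₁ + θ₂ - 1))

lemma deriv_Phi_eq_zero_iff {β θ₁ θ₂ t : ℝ} (hβ : β ≠ 0)
    (ht : t ∈ Ioo (max 0 (θ₁ + θ₂ - 1)) (min θ₁ θ₂)) :
    deriv (fun s => Phi β θ₁ θ₂ s) t = 0 ↔ exp (β * t) * critDen β θ₁ θ₂ = critNum β θ₁ θ₂ := by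
  obtain ⟨h₁₁, h₁₂, h₂₁, h₂₂⟩ := cells_pos_of_mem_Ioo ht
  have hQ := exp_mul_sub_mul_exp_mul_sub_pos hβ (sub_pos.1 h₁₂) (sub_pos.1 h₂₁)
  rw [← exp_eq_one_iff, exp_deriv_Phi hβ h₁₁ h₁₂ h₂₁ h₂₂, div_eq_one_iff_eq hQ.ne', critDen,
    critNum]
  constructor <;> intro h <;> linear_combination h

lemma mul_critNum_pos {β : ℝ} (θ₁ θ₂ : ℝ) (hβ : β ≠ 0) : 0 < β * critNum β θ₁ θ₂ := by
  have h := (mul_exp_mul_sub_exp_mul_pos_iff hβ).2 (sub_one_lt (θ₁ + θ₂))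
  rwa [mul_add, exp_add] at h

lemma mul_critDen_pos {β θ₁ : ℝ} (θ₂ : ℝ) (hβ : β ≠ 0) (hθ₁ : θ₁ ∈ Ioo 0 1) :
    0 < β * critDen β θ₁ θ₂ := by
  have ha := (mul_exp_mul_sub_exp_mul_pos_iff (u := θ₁) (v := 0) hβ).2 hθ₁.1
  have hb := (mul_exp_mul_sub_exp_mul_pos_iff (u := θ₂) (v := θ₁ + θ₂ - 1) hβ).2
    (by linarith [hθ₁.2])
  rw [mul_zero, exp_zero] at ha
  rw [critDen]
  linarith

lemma exp_mul_Rfun {β θ₁ : ℝ} (θ₂ : ℝ) (hβ : β ≠ 0) (hθ₁ : θ₁ ∈ Ioo 0 1) :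
    exp (β * Rfun β θ₁ θ₂) = critNum β θ₁ θ₂ / critDen β θ₁ θ₂ := by
  have hn := mul_critNum_pos θ₁ θ₂ hβ
  have hd := mul_critDen_pos θ₂ hβ hθ₁
  have hn' : critNum β θ₁ θ₂ ≠ 0 := right_ne_zero_of_mul hn.ne'
  have hexp : exp (-β) = exp (β * (θ₁ + θ₂ - 1)) / (exp (β * θ₁) * exp (β * θ₂)) := by
    rw [_root_.eq_div_iff (by positivity), ← exp_add, ← exp_add]
    ring_nf
  have hinner : 1 - (1 - exp (-β * θ₁)) * (1 - exp (-β * θ₂)) / (1 - exp (-β))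
      = critDen β θ₁ θ₂ / critNum β θ₁ θ₂ := by
    rw [neg_mul, neg_mul, exp_neg, exp_neg, hexp]
    unfold critNum at hn' ⊢
    unfold critDen
    field_simp
    ring
  have hpos : 0 < critDen β θ₁ θ₂ / critNum β θ₁ θ₂ := by
    rw [← mul_div_mul_left _ _ hβ]
    exact div_pos hd hn
  rw [Rfun, hinner, show β * (-(1 / β) * log (critDen β θ₁ θ₂ / critNum β θ₁ θ₂))
    = -log (critDen β θ₁ θ₂ / critNum β θ₁ θ₂) by field_simp, exp_neg, exp_log hpos, inv_div]

lemma Rfun_mem_Ioo {β θ₁ θ₂ : ℝ} (hβ : β ≠ 0) (hθ₁ : θ₁ ∈ Ioo 0 1) (hθ₂ : θ₂ ∈ Ioo 0 1) :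
    Rfun β θ₁ θ₂ ∈ Ioo (max 0 (θ₁ + θ₂ - 1)) (min θ₁ θ₂) := by
  obtain ⟨h₁, h₁'⟩ := hθ₁
  obtain ⟨h₂, h₂'⟩ := hθ₂
  have hd := mul_critDen_pos θ₂ hβ ⟨h₁, h₁'⟩
  have hd' : critDen β θ₁ θ₂ ≠ 0 := right_ne_zero_of_mul hd.ne'
  have hq : 0 < β / critDen β θ₁ θ₂ := by
    have h := div_pos hd (mul_self_pos.2 hd')
    rwa [mul_div_mul_right _ _ hd'] at h
  have key : ∀ u, β * (exp (β * Rfun β θ₁ θ₂) - exp (β * u))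
      = β / critDen β θ₁ θ₂ * (critNum β θ₁ θ₂ - critDen β θ₁ θ₂ * exp (β * u)) := fun u => by
    rw [exp_mul_Rfun θ₂ hβ ⟨h₁, h₁'⟩]
    field_simp
  have lower : ∀ u, 0 < critNum β θ₁ θ₂ - critDen β θ₁ θ₂ * exp (β * u) → u < Rfun β θ₁ θ₂ :=
    fun u h => (mul_exp_mul_sub_exp_mul_pos_iff hβ).1 (key u ▸ mul_pos hq h)
  have upper : ∀ u, critNum β θ₁ θ₂ - critDen β θ₁ θ₂ * exp (β * u) < 0 → Rfun β θ₁ θ₂ < u :=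
    fun u h => (mul_exp_mul_sub_exp_mul_pos_iff hβ).1 (by
      rw [← neg_sub, mul_neg, key, neg_pos]
      exact mul_neg_of_pos_of_neg hq h)
  have hab1 := exp_mul_sub_mul_exp_mul_sub_pos (u₁ := θ₁) (v₁ := 0) (u₂ := θ₂) (v₂ := 0) hβ h₁ h₂
  have habc := exp_mul_sub_mul_exp_mul_sub_pos (u₁ := θ₁) (v₁ := θ₁ + θ₂ - 1) (u₂ := θ₂)
    (v₂ := θ₁ + θ₂ - 1) hβ (by linarith) (by linarith)
  have ha1c := exp_mul_sub_mul_exp_mul_sub_pos (u₁ := θ₁) (v₁ := 0) (u₂ := θ₁)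
    (v₂ := θ₁ + θ₂ - 1) hβ h₁ (by linarith)
  have hb1c := exp_mul_sub_mul_exp_mul_sub_pos (u₁ := θ₂) (v₁ := 0) (u₂ := θ₂)
    (v₂ := θ₁ + θ₂ - 1) hβ h₂ (by linarith)
  simp only [mul_zero, exp_zero] at hab1 ha1c hb1c
  simp only [mem_Ioo, max_lt_iff, lt_min_iff]
  refine ⟨⟨lower 0 ?_, lower _ ?_⟩, upper _ ?_, upper _ ?_⟩ <;>
    simp only [critNum, critDen, mul_zero, exp_zero] <;> linarith

/-- For `β ≠ 0` and `(θ₁,θ₂) ∈ (0,1)²`, `R_β(θ₁,θ₂)` lies in the open interval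
`(max{0,θ₁+θ₂−1}, min{θ₁,θ₂})` and is the unique critical point of `t ↦ Φ_β(θ₁,θ₂;t)`
on the interior of `I_{θ₁,θ₂}`. -/
theorem statement6 (β θ₁ θ₂ : ℝ) (hβ : β ≠ 0)
    (hθ₁ : θ₁ ∈ Set.Ioo (0:ℝ) 1) (hθ₂ : θ₂ ∈ Set.Ioo (0:ℝ) 1) :
    Rfun β θ₁ θ₂ ∈ Set.Ioo (max 0 (θ₁ + θ₂ - 1)) (min θ₁ θ₂) ∧
    ∀ t ∈ Set.Ioo (max 0 (θ₁ + θ₂ - 1)) (min θ₁ θ₂),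
      (deriv (fun s => Phi β θ₁ θ₂ s) t = 0 ↔ t = Rfun β θ₁ θ₂) := by
  refine ⟨Rfun_mem_Ioo hβ hθ₁ hθ₂, fun t ht => ?_⟩
  have hd : critDen β θ₁ θ₂ ≠ 0 := right_ne_zero_of_mul (mul_critDen_pos θ₂ hβ hθ₁).ne'
  rw [deriv_Phi_eq_zero_iff hβ ht, ← _root_.eq_div_iff hd, ← exp_mul_Rfun θ₂ hβ hθ₁, exp_eq_exp,
    mul_right_inj' hβ]

end
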